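/- For every α ≥ 2, the vector (1, 2, ..., 2) of length α (first entry 1, all other entries 2) is uniquely realized by the path P_{2α−1}: the path on 2α−1 vertices is a cop-win graph whose rank cardinality vector is (1, 2, ..., 2), and every cop-win graph whose rank cardinality vector is (1, 2, ..., 2) of length α is isomorphic to P_{2α−1}. -/

import Mathlib

namespace CopsRobbers

variable {V : Type*}

/-- The closed neighborhood of `v` within the vertex set `S` (graphs are reflexive,
so `v` itself belongs to its closed neighborhood). -/
def closedNbhd (G : SimpleGraph V) (S : Set V) (v : V) : Set V :=
  {u | u ∈ S ∧ (u = v ∨ G.Adj u v)}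

/-- `v` is a strict corner of the subgraph induced on `S`: some other vertex `w ∈ S`
strictly corners `v`, i.e. `N[v] ⊊ N[w]` within `S`. -/
def StrictCorner (G : SimpleGraph V) (S : Set V) (v : V) : Prop :=
  v ∈ S ∧ ∃ w ∈ S, w ≠ v ∧ closedNbhd G S v ⊂ closedNbhd G S w

/-- The remaining vertex sets of the corner ranking procedure (0-indexed auxiliary
version): at each step all current strict corners are removed. -/
def stageAux (G : SimpleGraph V) : ℕ → Set V
  | 0 => Set.univ
  | n + 1 => stageAux G n \ {v | StrictCorner G (stageAux G n) v}

/-- `stage G k` is the vertex set of `G^(k)` (for `k ≥ 1`), so `stage G 1 = V(G)`. -/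
def stage (G : SimpleGraph V) (k : ℕ) : Set V := stageAux G (k - 1)

/-- The corner rank of a vertex: the least `k ≥ 1` such that `v` is a strict corner
of `G^(k)`, or `G^(k)` is a clique still containing `v`; and `⊤` (that is, `∞`) if
there is no such `k`. -/
noncomputable def cornerRank (G : SimpleGraph V) (v : V) : ℕ∞ :=
  sInf {k : ℕ∞ | ∃ n : ℕ, k = (n : ℕ∞) ∧ 1 ≤ n ∧
    (StrictCorner G (stage G n) v ∨ (G.IsClique (stage G n) ∧ v ∈ stage G n))}

/-- The corner rank of a graph: the largest corner rank of a vertex. -/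
noncomputable def graphRank (G : SimpleGraph V) : ℕ∞ := ⨆ v, cornerRank G v

/-- A graph is cop-win iff every vertex has finite corner rank. -/
def CopWin (G : SimpleGraph V) : Prop := ∀ v, cornerRank G v ≠ ⊤

/-- `v` dominates the set `S`: `v` is (reflexively) adjacent to every vertex of `S`. -/
def Dominates (G : SimpleGraph V) (v : V) (S : Set V) : Prop :=
  ∀ u ∈ S, u = v ∨ G.Adj v u

/-- A cop-win graph of corner rank `α ≥ 2` is `tp1` if some vertex of corner rank `α`
dominates the vertex set of `G^(α-1)`. -/
def Tp1 (G : SimpleGraph V) : Prop :=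
  ∃ α : ℕ, 2 ≤ α ∧ graphRank G = (α : ℕ∞) ∧
    ∃ v, cornerRank G v = (α : ℕ∞) ∧ Dominates G v (stage G (α - 1))

/-- `G` realizes the vector `(x_α, …, x_1)` (written as the list `[x_α, …, x_1]`):
`G` is cop-win of corner rank `α` and for each `k`, `x_k` is the number of vertices
of corner rank `k`. -/
def Realizes (G : SimpleGraph V) (x : List ℕ) : Prop :=
  CopWin G ∧ graphRank G = (x.length : ℕ∞) ∧
  ∀ i : Fin x.length,
    x.get i = {v | cornerRank G v = ((x.length - (i : ℕ) : ℕ) : ℕ∞)}.ncard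

/-- `G` r-realizes `x` (for `r ∈ {0,1}`): `G` realizes `x` and `G` is tp-r. -/
def RRealizes (G : SimpleGraph V) (r : ℕ) (x : List ℕ) : Prop :=
  Realizes G x ∧ (Tp1 G ↔ r = 1)

/-- A vector is realizable if it is the rank cardinality vector of some finite cop-win graph. -/
def Realizable (x : List ℕ) : Prop :=
  ∃ (W : Type) (_ : Fintype W) (G : SimpleGraph W), Realizes G x

/-- A vector is r-realizable if some finite tp-r cop-win graph realizes it. -/
def RRealizable (r : ℕ) (x : List ℕ) : Prop :=
  ∃ (W : Type) (_ : Fintype W) (G : SimpleGraph W), RRealizes G r x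

open Classical in
/-- The capture time of a cop-win graph: `cr(G) - r(G)`. -/
noncomputable def captureTime (G : SimpleGraph V) : ℕ :=
  (graphRank G).toNat - (if Tp1 G then 1 else 0)

end CopsRobbers

/-!
The corner ranking procedure strips the two ends off a path at every stage, so the vertex of
`P_{2α-1}` at distance `d` from the nearer end gets rank `d + 1`. Conversely, if `G` has rank
vector `(1, 2, …, 2)`, then `G^(α)` is a single vertex and `G^(k)` is `G^(k+1)` together with the
two strict corners of `G^(k)`. Going down from `k = α`, `G^(k+1)` is an induced path with an odd
number of vertices, and the two corners hang off its two ends: each corner has its closed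
neighbourhood inside that of a path vertex, and each end of the path, a strict corner of the
path but not of `G^(k)`, needs a corner of its own that sees it but not its path neighbour.
-/

namespace CopsRobbers

variable {V : Type*} {G : SimpleGraph V} {v : V}

def RankedAt (G : SimpleGraph V) (n : ℕ) (v : V) : Prop :=
  StrictCorner G (stage G n) v ∨ (G.IsClique (stage G n) ∧ v ∈ stage G n)

lemma cornerRank_eq_sInf :
    cornerRank G v = sInf {r : ℕ∞ | ∃ n : ℕ, r = n ∧ 1 ≤ n ∧ RankedAt G n v} := rfl

lemma stage_one : stage G 1 = Set.univ := rfl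

lemma stage_succ {k : ℕ} (hk : 1 ≤ k) :
    stage G (k + 1) = stage G k \ {v | StrictCorner G (stage G k) v} := by
  obtain ⟨j, rfl⟩ : ∃ j, k = j + 1 := ⟨k - 1, by omega⟩
  rfl

lemma stage_antitone : Antitone (stage G) := by
  have : Antitone (stageAux G) := antitone_nat_of_succ_le fun _ => Set.sdiff_subset
  exact fun i j hij => this (Nat.sub_le_sub_right hij 1)

lemma not_mem_stage_of_strictCorner {j k : ℕ} (hj : 1 ≤ j) (hjk : j < k)
    (hv : StrictCorner G (stage G j) v) : v ∉ stage G k := by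
  intro hvk
  have : v ∈ stage G (j + 1) := stage_antitone hjk hvk
  rw [stage_succ hj] at this
  exact this.2 hv

lemma exists_strictCorner_of_not_mem_stage {k : ℕ} (hv : v ∉ stage G k) :
    ∃ j, 1 ≤ j ∧ j < k ∧ StrictCorner G (stage G j) v := by
  induction k with
  | zero => exact absurd (Set.mem_univ v) hv
  | succ k ih =>
    by_cases hvk : v ∈ stage G k
    · rcases Nat.eq_zero_or_pos k with rfl | hk
      · exact absurd (Set.mem_univ v) hv
      · rw [stage_succ hk] at hv
        exact ⟨k, hk, k.lt_succ_self, by simpa [hvk] using hv⟩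
    · obtain ⟨j, hj, hjk, hcorner⟩ := ih hvk
      exact ⟨j, hj, hjk.trans k.lt_succ_self, hcorner⟩

lemma not_strictCorner_of_isClique {S : Set V} (hS : G.IsClique S) (v : V) :
    ¬ StrictCorner G S v := by
  rintro ⟨hv, w, -, -, hvw⟩
  refine hvw.not_superset fun u hu => ⟨hu.1, ?_⟩
  by_cases huv : u = v
  · exact .inl huv
  · exact .inr (hS hu.1 hv huv)

lemma stage_eq_of_isClique {j k : ℕ} (hk : 1 ≤ k) (hclique : G.IsClique (stage G k))
    (hkj : k ≤ j) : stage G j = stage G k := by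
  induction j, hkj using Nat.le_induction with
  | base => rfl
  | succ j hkj ih =>
    rw [stage_succ (hk.trans hkj), ih]
    simp [not_strictCorner_of_isClique hclique]

lemma cornerRank_eq_of_rankedAt {k : ℕ} (hk : 1 ≤ k) (hv : RankedAt G k v)
    (hmin : ∀ j, 1 ≤ j → j < k → ¬ RankedAt G j v) : cornerRank G v = k := by
  refine le_antisymm (sInf_le ⟨k, rfl, hk, hv⟩) (le_sInf ?_)
  rintro _ ⟨j, rfl, hj, hjv⟩
  exact_mod_cast not_lt.1 fun hjk => hmin j hj (by exact_mod_cast hjk) hjv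

lemma rankedAt_of_cornerRank_eq {k : ℕ} (h : cornerRank G v = k) :
    1 ≤ k ∧ RankedAt G k v := by
  have hmem : cornerRank G v ∈ {r : ℕ∞ | ∃ n : ℕ, r = n ∧ 1 ≤ n ∧ RankedAt G n v} := by
    refine csInf_mem (Set.nonempty_iff_ne_empty.2 fun hempty => ?_)
    rw [cornerRank_eq_sInf, hempty, sInf_empty] at h
    exact ENat.top_ne_natCast k h
  obtain ⟨n, hn, hn1, hnv⟩ := hmem
  obtain rfl : n = k := by exact_mod_cast hn.symm.trans h
  exact ⟨hn1, hnv⟩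

lemma cornerRank_eq_of_strictCorner {k : ℕ} (hk : 1 ≤ k)
    (hv : StrictCorner G (stage G k) v) : cornerRank G v = k := by
  refine cornerRank_eq_of_rankedAt hk (.inl hv) fun j hj hjk hjv => ?_
  rcases hjv with hcorner | ⟨hclique, -⟩
  · exact not_mem_stage_of_strictCorner hj hjk hcorner hv.1
  · rw [stage_eq_of_isClique hj hclique hjk.le] at hv
    exact not_strictCorner_of_isClique hclique v hv

lemma cornerRank_eq_of_isClique {k : ℕ} (hk : 1 ≤ k) (hclique : G.IsClique (stage G k))
    (hv : v ∈ stage G k) (hprev : ∀ j, 1 ≤ j → j < k → ¬ G.IsClique (stage G j)) :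
    cornerRank G v = k := by
  refine cornerRank_eq_of_rankedAt hk (.inr ⟨hclique, hv⟩) fun j hj hjk hjv => ?_
  rcases hjv with hcorner | ⟨hclique', -⟩
  · exact not_mem_stage_of_strictCorner hj hjk hcorner hv
  · exact hprev j hj hjk hclique'

lemma cornerRank_le_graphRank (v : V) : cornerRank G v ≤ graphRank G := le_iSup _ v

lemma graphRank_le_of_isClique {k : ℕ} (hk : 1 ≤ k) (hclique : G.IsClique (stage G k)) :
    graphRank G ≤ k := by
  refine iSup_le fun v => ?_
  by_cases hv : v ∈ stage G k
  · exact sInf_le ⟨k, rfl, hk, .inr ⟨hclique, hv⟩⟩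
  · obtain ⟨j, hj, hjk, hcorner⟩ := exists_strictCorner_of_not_mem_stage hv
    rw [cornerRank_eq_of_strictCorner hj hcorner]
    exact_mod_cast hjk.le

lemma strictCorners_stage_eq {k : ℕ} (hk : 1 ≤ k) (hlt : (k : ℕ∞) < graphRank G) :
    {v | StrictCorner G (stage G k) v} = {v | cornerRank G v = k} := by
  ext v
  refine ⟨cornerRank_eq_of_strictCorner hk, fun hv => ?_⟩
  obtain ⟨-, hcorner | ⟨hclique, -⟩⟩ := rankedAt_of_cornerRank_eq hv
  · exact hcorner
  · exact absurd (graphRank_le_of_isClique hk hclique) hlt.not_ge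

lemma stage_graphRank {α : ℕ} (hcw : CopWin G) (hα : graphRank G = α) :
    stage G α = {v | cornerRank G v = α} := by
  ext v
  constructor
  · intro hv
    obtain ⟨j, hj⟩ := ENat.ne_top_iff_exists.1 (hcw v)
    have hjα : j ≤ α := by
      have := cornerRank_le_graphRank (G := G) v
      rwa [hα, ← hj, Nat.cast_le] at this
    obtain ⟨hj1, hcorner | ⟨hclique, -⟩⟩ := rankedAt_of_cornerRank_eq hj.symm
    · obtain hlt | rfl := hjα.lt_or_eq
      · exact absurd hv (not_mem_stage_of_strictCorner hj1 hlt hcorner)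
      · exact hj.symm
    · have := graphRank_le_of_isClique hj1 hclique
      rw [hα, Nat.cast_le] at this
      show cornerRank G v = α
      rw [← hj, le_antisymm this hjα]
  · intro hv
    by_contra hvα
    obtain ⟨j, hj, hjα, hcorner⟩ := exists_strictCorner_of_not_mem_stage hvα
    have : (j : ℕ∞) = α := (cornerRank_eq_of_strictCorner hj hcorner).symm.trans hv
    exact hjα.ne (by exact_mod_cast this)

lemma exists_closedNbhd_ssubset_not_strictCorner {S : Set V}
    (hfin : {v | StrictCorner G S v}.Finite) (hv : StrictCorner G S v) :
    ∃ w ∈ S, ¬ StrictCorner G S w ∧ closedNbhd G S v ⊂ closedNbhd G S w := by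
  obtain ⟨w, ⟨hw, hvw⟩, hmax⟩ := Set.Finite.exists_maximalFor (closedNbhd G S)
    {w | StrictCorner G S w ∧ closedNbhd G S v ⊆ closedNbhd G S w}
    (hfin.subset fun _ hw => hw.1) ⟨v, hv, subset_rfl⟩
  obtain ⟨-, w', hw'S, -, hww'⟩ := hw
  by_cases hw' : StrictCorner G S w'
  · exact absurd (hmax ⟨hw', hvw.trans hww'.subset⟩ hww'.subset) hww'.not_superset
  · exact ⟨w', hw'S, hw', hvw.trans_ssubset hww'⟩

lemma realizes_one_cons_replicate_two_iff {α : ℕ} (hα : 1 ≤ α) :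
    Realizes G (1 :: List.replicate (α - 1) 2) ↔
      CopWin G ∧ graphRank G = α ∧ {v | cornerRank G v = α}.ncard = 1 ∧
        ∀ k, 1 ≤ k → k < α → {v | cornerRank G v = k}.ncard = 2 := by
  have hlen' : (List.replicate (α - 1) 2).length = α - 1 := List.length_replicate
  have hlen : (1 :: List.replicate (α - 1) 2).length = α := by
    rw [List.length_cons, hlen']; omega
  have hcounts : (∀ i : Fin (1 :: List.replicate (α - 1) 2).length,
      (1 :: List.replicate (α - 1) 2).get i =
        {v | cornerRank G v = (((1 :: List.replicate (α - 1) 2).length - i : ℕ) : ℕ∞)}.ncard) ↔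
      {v | cornerRank G v = α}.ncard = 1 ∧
        ∀ k, 1 ≤ k → k < α → {v | cornerRank G v = k}.ncard = 2 := by
    refine Fin.forall_fin_succ.trans ?_
    simp only [hlen, List.get_eq_getElem, List.getElem_cons_zero, Fin.val_zero, Nat.sub_zero,
      Fin.val_succ, List.getElem_cons_succ, List.getElem_replicate, eq_comm]
    refine and_congr_right fun _ => ⟨fun h k hk hkα => ?_, fun h i => ?_⟩
    · have := h ⟨α - 1 - k, by omega⟩
      rwa [show α - (α - 1 - k + 1) = k by omega] at this
    · exact h _ (by omega) (by omega)
  rw [Realizes, hcounts, hlen]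

structure IsInducedPath (G : SimpleGraph V) (S : Set V) (m : ℕ) (f : ℕ → V) : Prop where
  injOn : Set.InjOn f (Set.Iio m)
  image_eq : f '' Set.Iio m = S
  adj_iff : ∀ ⦃i j⦄, i < m → j < m → (G.Adj (f i) (f j) ↔ i + 1 = j ∨ j + 1 = i)

namespace IsInducedPath

variable {S : Set V} {m : ℕ} {f : ℕ → V}

lemma mem (hf : IsInducedPath G S m f) {t : ℕ} (ht : t < m) : f t ∈ S :=
  hf.image_eq ▸ Set.mem_image_of_mem f ht

lemma exists_eq (hf : IsInducedPath G S m f) {u : V} (hu : u ∈ S) : ∃ t < m, f t = u := by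
  rw [← hf.image_eq] at hu
  exact hu

lemma eq_or_adj_iff (hf : IsInducedPath G S m f) {s t : ℕ} (hs : s < m) (ht : t < m) :
    f s = f t ∨ G.Adj (f s) (f t) ↔ s = t ∨ s + 1 = t ∨ t + 1 = s := by
  rw [hf.injOn.eq_iff hs ht, hf.adj_iff hs ht]

lemma reverse (hf : IsInducedPath G S m f) : IsInducedPath G S m (fun i => f (m - 1 - i)) where
  injOn i hi j hj hij := by
    simp only [Set.mem_Iio] at hi hj
    have := hf.injOn (Set.mem_Iio.2 (by omega)) (Set.mem_Iio.2 (by omega)) hij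
    omega
  image_eq := by
    rw [← hf.image_eq]
    ext u
    constructor
    · rintro ⟨t, ht, rfl⟩
      exact ⟨m - 1 - t, Set.mem_Iio.2 (by rw [Set.mem_Iio] at ht; omega), rfl⟩
    · rintro ⟨t, ht, rfl⟩
      simp only [Set.mem_Iio] at ht
      exact ⟨m - 1 - t, Set.mem_Iio.2 (by omega), by simp only; congr 1; omega⟩
  adj_iff i j hi hj := by
    rw [hf.adj_iff (by omega) (by omega)]
    omega

lemma snoc (hf : IsInducedPath G S m f) {x : V} (hx : x ∉ S)
    (hadj : ∀ t < m, G.Adj x (f t) ↔ t + 1 = m) :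
    IsInducedPath G (insert x S) (m + 1) (fun i => if i < m then f i else x) where
  injOn i hi j hj hij := by
    simp only [Set.mem_Iio] at hi hj
    by_cases him : i < m <;> by_cases hjm : j < m <;> simp only [him, hjm, if_true, if_false] at hij
    · exact hf.injOn him hjm hij
    · exact absurd (hij ▸ hf.mem him) hx
    · exact absurd (hij ▸ hf.mem hjm) hx
    · omega
  image_eq := by
    ext u
    simp only [Set.mem_image, Set.mem_Iio, Set.mem_insert_iff, ← hf.image_eq]
    constructor
    · rintro ⟨i, hi, rfl⟩
      split_ifs with him
      · exact .inr ⟨i, him, rfl⟩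
      · exact .inl rfl
    · rintro (rfl | ⟨t, ht, rfl⟩)
      · exact ⟨m, by omega, by simp⟩
      · exact ⟨t, by omega, by simp [ht]⟩
  adj_iff i j hi hj := by
    by_cases him : i < m <;> by_cases hjm : j < m <;> simp only [him, hjm, if_true, if_false]
    · exact hf.adj_iff him hjm
    · rw [G.adj_comm, hadj i him]
      omega
    · rw [hadj j hjm]
      omega
    · simp only [SimpleGraph.irrefl, false_iff]
      omega

lemma extend_ends {x y : V} (hf : IsInducedPath G (S \ {x, y}) m f) (hm : 0 < m)
    (hxS : x ∈ S) (hyS : y ∈ S) (hxy : x ≠ y) (hnxy : ¬ G.Adj x y)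
    (hx : ∀ t < m, G.Adj x (f t) ↔ t = 0) (hy : ∀ t < m, G.Adj y (f t) ↔ t + 1 = m) :
    ∃ g, IsInducedPath G S (m + 2) g := by
  have hfy := (hf.snoc (by simp) hy).reverse
  have hfxy := hfy.snoc (x := x) (by simp [hxy]) fun t ht => by
    rcases Nat.eq_zero_or_pos t with rfl | ht0
    · simp only [show ¬ m + 1 - 1 - 0 < m by omega, if_false, hnxy, false_iff]
      omega
    · simp only [show m + 1 - 1 - t < m by omega, if_true, hx _ (show m + 1 - 1 - t < m by omega)]
      omega
  have hS : insert x (insert y (S \ {x, y})) = S := by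
    ext u
    by_cases hux : u = x <;> by_cases huy : u = y <;> simp_all
  exact ⟨_, hS ▸ hfxy⟩

end IsInducedPath

lemma isInducedPath_singleton (z : V) : IsInducedPath G {z} 1 (fun _ => z) where
  injOn i hi j hj _ := by simp_all
  image_eq := Set.Nonempty.image_const ⟨0, Nat.one_pos⟩ z
  adj_iff i j hi hj := by simp only [SimpleGraph.irrefl, false_iff]; omega

lemma isInducedPath_pathGraph {n : ℕ} (hn : 0 < n) :
    IsInducedPath (SimpleGraph.pathGraph n) Set.univ n (fun i => ⟨min i (n - 1), by omega⟩) where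
  injOn i hi j hj hij := by
    simp only [Set.mem_Iio, Fin.mk.injEq] at hi hj hij
    omega
  image_eq := Set.eq_univ_of_forall fun v => ⟨v, v.2, Fin.ext (by simp only; omega)⟩
  adj_iff i j hi hj := by
    rw [SimpleGraph.pathGraph_adj]
    simp only
    omega

lemma IsInducedPath.nonempty_iso {n : ℕ} {f : ℕ → V} (hf : IsInducedPath G Set.univ n f) :
    Nonempty (G ≃g SimpleGraph.pathGraph n) := by
  have hbij : Function.Bijective (fun i : Fin n => f i) := by
    refine ⟨fun i j hij => Fin.ext (hf.injOn i.2 j.2 hij), fun v => ?_⟩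
    obtain ⟨t, ht, rfl⟩ := hf.exists_eq (Set.mem_univ v)
    exact ⟨⟨t, ht⟩, rfl⟩
  exact ⟨SimpleGraph.Iso.symm ⟨Equiv.ofBijective _ hbij, fun {i j} => by
    simp [hf.adj_iff i.2 j.2, SimpleGraph.pathGraph_adj]⟩⟩

section AttachingCorners

variable {S : Set V} {a b : V} {m : ℕ} {f : ℕ → V}

lemma IsInducedPath.mem_closedNbhd_iff {T : Set V} (hf : IsInducedPath G T m f) (hTS : T ⊆ S)
    {s t : ℕ} (hs : s < m) (ht : t < m) :
    f s ∈ closedNbhd G S (f t) ↔ s = t ∨ s + 1 = t ∨ t + 1 = s :=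
  ⟨fun h => (hf.eq_or_adj_iff hs ht).1 h.2,
    fun h => ⟨hTS (hf.mem hs), (hf.eq_or_adj_iff hs ht).2 h⟩⟩

lemma exists_closedNbhd_ssubset_of_strictCorners_eq_pair
    (hcor : {v | StrictCorner G S v} = {a, b}) (hf : IsInducedPath G (S \ {a, b}) m f)
    {x : V} (hx : x = a ∨ x = b) : ∃ t < m, closedNbhd G S x ⊂ closedNbhd G S (f t) := by
  have hxc : x ∈ {v | StrictCorner G S v} := hcor ▸ hx
  obtain ⟨w, hwS, hw, hxw⟩ := exists_closedNbhd_ssubset_not_strictCorner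
    (hcor ▸ Set.toFinite {a, b}) hxc
  have hw' : w ∉ ({a, b} : Set V) := by rw [← hcor]; exact hw
  obtain ⟨t, ht, rfl⟩ := hf.exists_eq ⟨hwS, hw'⟩
  exact ⟨t, ht, hxw⟩

lemma IsInducedPath.mem_pair_or_exists_eq (hf : IsInducedPath G (S \ {a, b}) m f) {u : V}
    (hu : u ∈ S) : (u = a ∨ u = b) ∨ ∃ t < m, f t = u := by
  by_cases h : u = a ∨ u = b
  · exact .inl h
  · exact .inr (hf.exists_eq ⟨hu, h⟩)

lemma strictCorner_of_strictCorners_eq_pair (hcor : {v | StrictCorner G S v} = {a, b})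
    {x : V} (hx : x = a ∨ x = b) : StrictCorner G S x := by
  have : x ∈ {v | StrictCorner G S v} := hcor ▸ hx
  exact this

lemma IsInducedPath.adj_of_closedNbhd_subset (hf : IsInducedPath G (S \ {a, b}) m f) {x : V}
    (hxS : x ∈ S) (hx : x = a ∨ x = b) {t : ℕ} (ht : t < m)
    (h : closedNbhd G S x ⊆ closedNbhd G S (f t)) : G.Adj x (f t) :=
  (h ⟨hxS, .inl rfl⟩).2.resolve_left fun hxt => (hf.mem ht).2 (hxt ▸ hx)

lemma exists_corner_pendant_at_start (hcor : {v | StrictCorner G S v} = {a, b})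
    (hf : IsInducedPath G (S \ {a, b}) m f) (hm : 3 ≤ m) :
    ∃ x, (x = a ∨ x = b) ∧ closedNbhd G S x ⊆ closedNbhd G S (f 0) ∧
      ∀ t < m, G.Adj x (f t) ↔ t = 0 := by
  have hN : ∀ {s t}, s < m → t < m →
      (f s ∈ closedNbhd G S (f t) ↔ s = t ∨ s + 1 = t ∨ t + 1 = s) :=
    hf.mem_closedNbhd_iff Set.sdiff_subset
  -- within the path `f 0` is strictly cornered by `f 1`; as `f 0` is no strict corner of `S`,
  -- a corner must be adjacent to `f 0` but not to `f 1`
  obtain ⟨x, hx, hx0, hx1⟩ : ∃ x, (x = a ∨ x = b) ∧ G.Adj x (f 0) ∧ ¬ G.Adj x (f 1) := by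
    by_contra! hno
    have h0 : f 0 ∉ {v | StrictCorner G S v} := hcor ▸ (hf.mem (by omega)).2
    refine h0 ⟨(hf.mem (by omega)).1, f 1, (hf.mem (by omega)).1,
      fun h => absurd (hf.injOn (Set.mem_Iio.2 (by omega)) (Set.mem_Iio.2 (by omega)) h) (by omega),
      ssubset_iff_subset_not_subset.2 ⟨fun u hu => ?_, fun hsub => ?_⟩⟩
    · obtain hu' | ⟨s, hs, rfl⟩ := hf.mem_pair_or_exists_eq hu.1
      · have hadj : G.Adj u (f 0) := hu.2.resolve_left fun h => (hf.mem (by omega)).2 (h ▸ hu')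
        exact ⟨hu.1, .inr (hno u hu' hadj)⟩
      · have := (hN hs (by omega)).1 hu
        exact (hN hs (by omega)).2 (by omega)
    · have := (hN (by omega) (by omega)).1 (hsub ((hN (s := 2) (by omega) (by omega)).2 (by omega)))
      omega
  have hxS := (strictCorner_of_strictCorners_eq_pair hcor hx).1
  obtain ⟨t, ht, hxt⟩ := exists_closedNbhd_ssubset_of_strictCorners_eq_pair hcor hf hx
  have hnear : ∀ {s}, s < m → G.Adj x (f s) → s = t ∨ s + 1 = t ∨ t + 1 = s :=
    fun hs h => (hN hs ht).1 (hxt.subset ⟨(hf.mem hs).1, .inr h.symm⟩)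
  obtain rfl : t = 0 := by
    have := hnear (by omega) hx0
    obtain rfl | rfl : t = 0 ∨ t = 1 := by omega
    · rfl
    · exact absurd (hf.adj_of_closedNbhd_subset hxS hx ht hxt.subset) hx1
  refine ⟨x, hx, hxt.subset, fun s hs => ⟨fun h => ?_, fun h => h ▸ hx0⟩⟩
  have := hnear hs h
  obtain rfl | rfl : s = 0 ∨ s = 1 := by omega
  · rfl
  · exact absurd h hx1

lemma exists_isInducedPath_of_three_le (hcor : {v | StrictCorner G S v} = {a, b})
    (hf : IsInducedPath G (S \ {a, b}) m f) (hm : 3 ≤ m) :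
    ∃ g, IsInducedPath G S (m + 2) g := by
  obtain ⟨x, hx, hxN, hxf⟩ := exists_corner_pendant_at_start hcor hf hm
  obtain ⟨y, hy, -, hyf⟩ := exists_corner_pendant_at_start hcor hf.reverse hm
  have hyf' : ∀ t < m, G.Adj y (f t) ↔ t + 1 = m := fun t ht => by
    have := hyf (m - 1 - t) (by omega)
    rw [show m - 1 - (m - 1 - t) = t by omega] at this
    rw [this]
    omega
  have hyS := (strictCorner_of_strictCorners_eq_pair hcor hy).1
  have hxy : x ≠ y := by
    rintro rfl
    have := (hxf (m - 1) (by omega)).1 ((hyf' _ (by omega)).2 (by omega))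
    omega
  have hnxy : ¬ G.Adj x y := fun h => by
    rcases (hxN ⟨hyS, .inr h.symm⟩).2 with hy0 | hy0
    · exact (hf.mem (by omega)).2 (hy0 ▸ hy)
    · have := (hyf' 0 (by omega)).1 hy0
      omega
  have hpair : ({x, y} : Set V) = {a, b} := by
    rcases hx with rfl | rfl <;> rcases hy with rfl | rfl <;> simp_all [Set.pair_comm]
  rw [← hpair] at hf
  exact hf.extend_ends (by omega) (strictCorner_of_strictCorners_eq_pair hcor hx).1 hyS hxy hnxy
    hxf hyf'

lemma exists_isInducedPath_of_eq_one (hab : a ≠ b) (hcor : {v | StrictCorner G S v} = {a, b})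
    (hf : IsInducedPath G (S \ {a, b}) 1 f) : ∃ g, IsInducedPath G S 3 g := by
  have haS := (strictCorner_of_strictCorners_eq_pair hcor (.inl rfl)).1
  have hbS := (strictCorner_of_strictCorners_eq_pair hcor (.inr rfl)).1
  obtain ⟨ta, hta, ha⟩ := exists_closedNbhd_ssubset_of_strictCorners_eq_pair hcor hf (.inl rfl)
  obtain ⟨tb, htb, hb⟩ := exists_closedNbhd_ssubset_of_strictCorners_eq_pair hcor hf (.inr rfl)
  obtain rfl : ta = 0 := by omega
  obtain rfl : tb = 0 := by omega
  have haz := hf.adj_of_closedNbhd_subset haS (.inl rfl) hta ha.subset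
  have hbz := hf.adj_of_closedNbhd_subset hbS (.inr rfl) htb hb.subset
  -- were `a` and `b` adjacent, `a` would see all of `S`
  have hnab : ¬ G.Adj a b := fun h => ha.not_superset fun u hu => by
    obtain (rfl | rfl) | ⟨s, hs, rfl⟩ := hf.mem_pair_or_exists_eq hu.1
    · exact ⟨haS, .inl rfl⟩
    · exact ⟨hbS, .inr h.symm⟩
    · obtain rfl : s = 0 := by omega
      exact ⟨hu.1, .inr haz.symm⟩
  refine hf.extend_ends one_pos haS hbS hab hnab (fun t ht => ?_) (fun t ht => ?_) <;>
    obtain rfl : t = 0 := by omega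
  · simpa using haz
  · simpa using hbz

lemma exists_isInducedPath_of_strictCorners_eq_pair (hab : a ≠ b)
    (hcor : {v | StrictCorner G S v} = {a, b}) (hf : IsInducedPath G (S \ {a, b}) m f)
    (hm : m ≠ 2) : ∃ g, IsInducedPath G S (m + 2) g := by
  obtain rfl | rfl | hm : m = 0 ∨ m = 1 ∨ 3 ≤ m := by omega
  · obtain ⟨t, ht, -⟩ := exists_closedNbhd_ssubset_of_strictCorners_eq_pair hcor hf (.inl rfl)
    omega
  · exact exists_isInducedPath_of_eq_one hab hcor hf
  · exact exists_isInducedPath_of_three_le hcor hf hm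

end AttachingCorners

section PathRanks

variable {n α : ℕ} {f : ℕ → V}

lemma IsInducedPath.mem_closedNbhd_image_iff (hf : IsInducedPath G Set.univ n f) {I : Set ℕ}
    (hI : I ⊆ Set.Iio n) {s t : ℕ} (hs : s < n) (ht : t < n) :
    f s ∈ closedNbhd G (f '' I) (f t) ↔ s ∈ I ∧ (s = t ∨ s + 1 = t ∨ t + 1 = s) := by
  change f s ∈ f '' I ∧ _ ↔ _
  rw [hf.eq_or_adj_iff hs ht, hf.injOn.mem_image_iff hI hs]

lemma IsInducedPath.strictCorner_image_Icc_iff (hf : IsInducedPath G Set.univ n f) {p q i : ℕ}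
    (hpq : p + 2 ≤ q) (hq : q < n) (hi : i ∈ Set.Icc p q) :
    StrictCorner G (f '' Set.Icc p q) (f i) ↔ i = p ∨ i = q := by
  have hI : Set.Icc p q ⊆ Set.Iio n := fun s hs => lt_of_le_of_lt hs.2 hq
  have hN : ∀ {s t}, s ∈ Set.Icc p q → t ∈ Set.Icc p q →
      (f s ∈ closedNbhd G (f '' Set.Icc p q) (f t) ↔
        s ∈ Set.Icc p q ∧ (s = t ∨ s + 1 = t ∨ t + 1 = s)) :=
    fun hs ht => hf.mem_closedNbhd_image_iff hI (hI hs) (hI ht)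
  simp only [Set.mem_Icc] at hi hN
  constructor
  · rintro ⟨-, -, ⟨j, hj, rfl⟩, hji, hsub⟩
    simp only [Set.mem_Icc] at hj
    by_contra hinterior
    have h1 := (hN (s := i - 1) (by omega) hj).1
      (hsub.subset ((hN (by omega) hi).2 ⟨by omega, by omega⟩))
    have h2 := (hN (s := i + 1) (by omega) hj).1
      (hsub.subset ((hN (by omega) hi).2 ⟨by omega, by omega⟩))
    exact hji (congrArg f (by omega))
  · intro hend
    obtain ⟨j, s₀, hj, hs₀, hji, hsub, hs₀j, hs₀i⟩ : ∃ j s₀, (p ≤ j ∧ j ≤ q) ∧ (p ≤ s₀ ∧ s₀ ≤ q) ∧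
        j ≠ i ∧ (∀ s, p ≤ s → s ≤ q → (s = i ∨ s + 1 = i ∨ i + 1 = s) →
          (s = j ∨ s + 1 = j ∨ j + 1 = s)) ∧
        (s₀ = j ∨ s₀ + 1 = j ∨ j + 1 = s₀) ∧ ¬ (s₀ = i ∨ s₀ + 1 = i ∨ i + 1 = s₀) := by
      rcases hend with rfl | rfl
      · exact ⟨i + 1, i + 2, by omega, by omega, by omega, fun s _ _ _ => by omega, by omega,
          by omega⟩
      · exact ⟨i - 1, i - 2, by omega, by omega, by omega, fun s _ _ _ => by omega, by omega,
          by omega⟩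
    refine ⟨⟨i, hi, rfl⟩, f j, ⟨j, hj, rfl⟩,
      fun h => hji (hf.injOn (hI hj) (hI hi) h), ssubset_iff_subset_not_subset.2 ⟨?_, ?_⟩⟩
    · intro u hu
      obtain ⟨s, hs, rfl⟩ := hu.1
      rw [hN hs hi] at hu
      exact (hN hs hj).2 ⟨hu.1, hsub s hs.1 hs.2 hu.2⟩
    · exact fun h => hs₀i ((hN hs₀ hi).1 (h ((hN hs₀ hj).2 ⟨hs₀, hs₀j⟩))).2

lemma IsInducedPath.stage_eq (hf : IsInducedPath G Set.univ (2 * α - 1) f) {k : ℕ}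
    (hk : 1 ≤ k) (hkα : k ≤ α) : stage G k = f '' Set.Icc (k - 1) (2 * α - 1 - k) := by
  induction k, hk using Nat.le_induction with
  | base =>
    rw [stage_one, ← hf.image_eq]
    congr 1
    ext i
    simp only [Set.mem_Iio, Set.mem_Icc]
    omega
  | succ k hk ih =>
    rw [stage_succ hk, ih (by omega)]
    ext u
    constructor
    · rintro ⟨⟨s, hs, rfl⟩, hs'⟩
      rw [Set.mem_ofPred_eq, hf.strictCorner_image_Icc_iff (by omega) (by omega) hs] at hs'
      simp only [Set.mem_Icc] at hs
      exact ⟨s, ⟨by omega, by omega⟩, rfl⟩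
    · rintro ⟨s, hs, rfl⟩
      simp only [Set.mem_Icc] at hs
      have hs' : s ∈ Set.Icc (k - 1) (2 * α - 1 - k) := ⟨by omega, by omega⟩
      refine ⟨⟨s, hs', rfl⟩, ?_⟩
      rw [Set.mem_ofPred_eq, hf.strictCorner_image_Icc_iff (by omega) (by omega) hs']
      omega

lemma IsInducedPath.cornerRank_eq (hf : IsInducedPath G Set.univ (2 * α - 1) f) {i : ℕ}
    (hi : i < 2 * α - 1) : cornerRank G (f i) = ((min i (2 * α - 2 - i) + 1 : ℕ) : ℕ∞) := by
  obtain ⟨k, hk⟩ : ∃ k, min i (2 * α - 2 - i) + 1 = k := ⟨_, rfl⟩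
  rw [hk]
  have hstage := hf.stage_eq (k := k) (by omega) (by omega)
  obtain hkα | rfl : k < α ∨ k = α := by omega
  · refine cornerRank_eq_of_strictCorner (by omega) ?_
    rw [hstage, hf.strictCorner_image_Icc_iff (by omega) (by omega) ⟨by omega, by omega⟩]
    omega
  · have hsingle : stage G k = {f i} := by
      rw [hstage, show Set.Icc (k - 1) (2 * k - 1 - k) = {i} by
        ext j; rw [Set.mem_Icc, Set.mem_singleton_iff]; omega, Set.image_singleton]
    refine cornerRank_eq_of_isClique (by omega) ?_ (by rw [hsingle]; rfl) fun j hj hjk hclique => ?_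
    · rw [hsingle]
      exact SimpleGraph.IsClique.of_subsingleton Set.subsingleton_singleton
    · refine not_strictCorner_of_isClique hclique (f (j - 1)) ?_
      rw [hf.stage_eq hj (by omega),
        hf.strictCorner_image_Icc_iff (by omega) (by omega) ⟨by omega, by omega⟩]
      omega

lemma IsInducedPath.realizes_one_cons_replicate_two
    (hf : IsInducedPath G Set.univ (2 * α - 1) f) (hα : 1 ≤ α) :
    Realizes G (1 :: List.replicate (α - 1) 2) := by
  have hrank : ∀ k : ℕ, {v | cornerRank G v = k} =
      f '' {i | i < 2 * α - 1 ∧ min i (2 * α - 2 - i) + 1 = k} := by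
    intro k
    ext v
    obtain ⟨i, hi, rfl⟩ := hf.exists_eq (Set.mem_univ v)
    rw [Set.mem_ofPred_eq, hf.cornerRank_eq hi, Nat.cast_inj,
      hf.injOn.mem_image_iff (fun j hj => hj.1) hi]
    simp [hi]
  have hncard : ∀ k : ℕ, {v | cornerRank G v = k}.ncard =
      {i | i < 2 * α - 1 ∧ min i (2 * α - 2 - i) + 1 = k}.ncard := fun k => by
    rw [hrank, (hf.injOn.mono fun j hj => hj.1).ncard_image]
  refine (realizes_one_cons_replicate_two_iff hα).2 ⟨fun v => ?_, ?_, ?_, fun k hk hkα => ?_⟩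
  · obtain ⟨i, hi, rfl⟩ := hf.exists_eq (Set.mem_univ v)
    rw [hf.cornerRank_eq hi]
    exact ENat.natCast_ne_top _
  · refine le_antisymm (iSup_le fun v => ?_) ?_
    · obtain ⟨i, hi, rfl⟩ := hf.exists_eq (Set.mem_univ v)
      rw [hf.cornerRank_eq hi]
      exact_mod_cast (by omega : min i (2 * α - 2 - i) + 1 ≤ α)
    · have := hf.cornerRank_eq (i := α - 1) (by omega)
      rw [show min (α - 1) (2 * α - 2 - (α - 1)) + 1 = α by omega] at this
      exact this ▸ cornerRank_le_graphRank _
  · have hidx : {i | i < 2 * α - 1 ∧ min i (2 * α - 2 - i) + 1 = α} = {α - 1} := by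
      ext i
      simp only [Set.mem_ofPred_eq, Set.mem_singleton_iff]
      omega
    rw [hncard, hidx, Set.ncard_singleton]
  · have hidx : {i | i < 2 * α - 1 ∧ min i (2 * α - 2 - i) + 1 = k} = {k - 1, 2 * α - 1 - k} := by
      ext i
      simp only [Set.mem_ofPred_eq, Set.mem_insert_iff, Set.mem_singleton_iff]
      omega
    rw [hncard, hidx, Set.ncard_pair (by omega)]

end PathRanks

lemma exists_isInducedPath_of_realizes {α : ℕ} (hα : 1 ≤ α)
    (h : Realizes G (1 :: List.replicate (α - 1) 2)) :
    ∃ f, IsInducedPath G Set.univ (2 * α - 1) f := by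
  obtain ⟨hcw, hrank, htop, htwo⟩ := (realizes_one_cons_replicate_two_iff hα).1 h
  have hstage : ∀ d ≤ α - 1, ∃ f, IsInducedPath G (stage G (α - d)) (2 * d + 1) f := by
    intro d hd
    induction d with
    | zero =>
      obtain ⟨z, hz⟩ := Set.ncard_eq_one.1 htop
      rw [Nat.sub_zero, stage_graphRank hcw hrank, hz]
      exact ⟨_, isInducedPath_singleton z⟩
    | succ d ih =>
      obtain ⟨f, hf⟩ := ih (by omega)
      obtain ⟨a, b, hab, hk⟩ := Set.ncard_eq_two.1 (htwo (α - (d + 1)) (by omega) (by omega))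
      have hcor : {v | StrictCorner G (stage G (α - (d + 1))) v} = {a, b} := by
        rw [strictCorners_stage_eq (by omega) (by rw [hrank]; exact_mod_cast (by omega)), hk]
      have hnext : stage G (α - (d + 1)) \ {a, b} = stage G (α - d) := by
        rw [← hcor, ← stage_succ (by omega), show α - (d + 1) + 1 = α - d by omega]
      rw [← hnext] at hf
      obtain ⟨g, hg⟩ := exists_isInducedPath_of_strictCorners_eq_pair hab hcor hf (by omega)
      exact ⟨g, by rwa [show 2 * (d + 1) + 1 = 2 * d + 1 + 2 by omega]⟩
  obtain ⟨f, hf⟩ := hstage (α - 1) le_rfl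
  rw [show α - (α - 1) = 1 by omega, show 2 * (α - 1) + 1 = 2 * α - 1 by omega, stage_one] at hf
  exact ⟨f, hf⟩

end CopsRobbers

/-- for `α ≥ 2`, the vector `(1, 2, …, 2)` of length `α` is uniquely realized
by the path on `2α - 1` vertices. -/
theorem CopsRobbers.one_twos_uniquely_realized_by_path (α : ℕ) (hα : 2 ≤ α) :
    CopsRobbers.Realizes (SimpleGraph.pathGraph (2 * α - 1))
      (1 :: List.replicate (α - 1) 2) ∧
    ∀ (W : Type) (_ : Fintype W) (G : SimpleGraph W),
      CopsRobbers.Realizes G (1 :: List.replicate (α - 1) 2) →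
      Nonempty (G ≃g SimpleGraph.pathGraph (2 * α - 1)) := by
  refine ⟨(CopsRobbers.isInducedPath_pathGraph (by omega)).realizes_one_cons_replicate_two
    (by omega), fun W _ G h => ?_⟩
  obtain ⟨f, hf⟩ := CopsRobbers.exists_isInducedPath_of_realizes (by omega) h
  exact hf.nonempty_iso
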